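/- Let d ≥ 1 and for α ∈ (0,1) define the fractional α-perimeter of a Borel set E ⊂ ℝ^d by Per_α(E) = ∫_E ∫_{E^c} |x − y|^{−d−α} dx dy. Let E ⊂ ℝ^d be a Borel set with |E| < ∞ and such that Per_{α_0}(E) < ∞ for some α_0 ∈ (0,1). Then lim_{α→0⁺} α Per_α(E) = κ_{d−1} |E|, where κ_{d−1} = 2π^{d/2}/Γ(d/2) is the surface area of the unit sphere S^{d−1}. -/

import Mathlib

/-!
For `y ∈ E` split `∫_{Eᶜ} |x - y|^{-d-α} dx` at `|x - y| = 1`. Outside the unit ball around `y`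
the kernel integrates over all of `ℝ^d` to exactly `κ_{d-1}/α` (polar coordinates), and the part of
that region lying in `E` carries at most `|E|` since the kernel is `≤ 1` there. Inside the ball the
kernel only grows when `α` increases to `α₀`. Hence
`(κ_{d-1}/α - |E|) |E| ≤ Per_α(E) ≤ Per_{α₀}(E) + κ_{d-1} |E| / α`; multiply by `α` and let `α → 0`.
-/

open MeasureTheory Filter Topology ENNReal

/-- The fractional `α`-perimeter `Per_α(E) = ∫_E ∫_{Eᶜ} |x − y|^{−d−α} dx dy`. -/
noncomputable def fracPer {d : ℕ} (α : ℝ) (E : Set (EuclideanSpace ℝ (Fin d))) :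
    ℝ≥0∞ :=
  ∫⁻ y in E, ∫⁻ x in Eᶜ, ENNReal.ofReal (‖x - y‖ ^ (-(d : ℝ) - α))

open Set Metric Module

/-- The area of the unit sphere `S^{n-1} ⊂ ℝⁿ`, i.e. the paper's `κ_{n-1}`. -/
noncomputable def unitSphereArea (n : ℕ) : ℝ :=
  2 * Real.pi ^ ((n : ℝ) / 2) / Real.Gamma ((n : ℝ) / 2)

section Polar

variable {F : Type*} [NormedAddCommGroup F] [NormedSpace ℝ F] [FiniteDimensional ℝ F]
  [MeasurableSpace F] [BorelSpace F] [Nontrivial F] (μ : Measure F) [μ.IsAddHaarMeasure]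

theorem lintegral_compl_ball_rpow_norm {α : ℝ} (hα : 0 < α) :
    ∫⁻ x in (ball 0 1)ᶜ, ENNReal.ofReal (‖x‖ ^ (-(finrank ℝ F : ℝ) - α)) ∂μ =
      ENNReal.ofReal (finrank ℝ F * μ.real (ball 0 1) / α) := by
  set n := finrank ℝ F
  have hn : 1 ≤ n := finrank_pos
  set f : ℝ → ℝ := (Ici 1).indicator (· ^ (-(n : ℝ) - α))
  have hradial : EqOn (fun r ↦ r ^ (n - 1) • f r) ((Ici 1).indicator (· ^ (-1 - α))) (Ioi 0) := by
    intro r (hr : 0 < r)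
    by_cases h1 : r ∈ Ici 1
    · simp only [f, indicator_of_mem h1, smul_eq_mul, ← Real.rpow_natCast, Nat.cast_sub hn,
        ← Real.rpow_add hr]
      ring_nf
    · simp [f, h1]
  have hint : IntegrableOn (fun r ↦ r ^ (n - 1) • f r) (Ioi 0) := by
    refine IntegrableOn.congr_fun ?_ hradial.symm measurableSet_Ioi
    exact ((integrable_indicator_iff measurableSet_Ici).2
      ((integrableOn_Ici_iff_integrableOn_Ioi (by simp)).2
        (integrableOn_Ioi_rpow_of_lt (by linarith) one_pos))).integrableOn
  have hrad : ∫ r in Ioi 0, r ^ (n - 1) • f r = 1 / α := by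
    rw [setIntegral_congr_fun measurableSet_Ioi hradial, setIntegral_indicator measurableSet_Ici,
      inter_eq_right.2 (Ici_subset_Ioi.2 one_pos), integral_Ici_eq_integral_Ioi,
      integral_Ioi_rpow_of_lt (by linarith) one_pos, Real.one_rpow, show -1 - α + 1 = -α by ring,
      div_neg, neg_div, neg_neg]
  calc ∫⁻ x in (ball 0 1)ᶜ, ENNReal.ofReal (‖x‖ ^ (-(n : ℝ) - α)) ∂μ
      = ∫⁻ x, ENNReal.ofReal (f ‖x‖) ∂μ := by
        rw [← lintegral_indicator measurableSet_ball.compl]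
        congr 1 with x
        by_cases hx : ‖x‖ < 1
        · simp [f, indicator, hx]
        · simp [f, indicator, hx, not_lt.1 hx]
    _ = ENNReal.ofReal (∫ x, f ‖x‖ ∂μ) :=
        (ofReal_integral_eq_lintegral_ofReal ((integrable_fun_norm_addHaar μ).2 hint)
          (ae_of_all _ fun x ↦
            indicator_nonneg (fun r hr ↦ Real.rpow_nonneg (zero_le_one.trans hr) _) _)).symm
    _ = _ := by
        rw [integral_fun_norm_addHaar, hrad, nsmul_eq_mul, smul_eq_mul, mul_one_div, mul_div_assoc]

theorem lintegral_compl_ball_rpow_dist {α : ℝ} (hα : 0 < α) (y : F) :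
    ∫⁻ x in (ball y 1)ᶜ, ENNReal.ofReal (‖x - y‖ ^ (-(finrank ℝ F : ℝ) - α)) ∂μ =
      ENNReal.ofReal (finrank ℝ F * μ.real (ball 0 1) / α) := by
  have hpre : (· - y) ⁻¹' (ball (0 : F) 1)ᶜ = (ball y 1)ᶜ := by ext x; simp [dist_eq_norm]
  rw [← hpre, (measurePreserving_sub_right μ y).setLIntegral_comp_preimage_emb
    (MeasurableEquiv.subRight y).measurableEmbedding (fun z ↦ ENNReal.ofReal (‖z‖ ^ _)),
    lintegral_compl_ball_rpow_norm μ hα]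

end Polar

theorem finrank_mul_volumeReal_unitBall {E : Type*} [NormedAddCommGroup E] [InnerProductSpace ℝ E]
    [FiniteDimensional ℝ E] [MeasurableSpace E] [BorelSpace E] [Nontrivial E] :
    finrank ℝ E * volume.real (ball (0 : E) 1) = unitSphereArea (finrank ℝ E) := by
  set n := finrank ℝ E
  have hn0 : (n : ℝ) ≠ 0 := Nat.cast_ne_zero.2 finrank_pos.ne'
  have hn : (0 : ℝ) < n / 2 := by positivity
  have hsqrt : √Real.pi ^ n = Real.pi ^ ((n : ℝ) / 2) := by
    rw [Real.sqrt_eq_rpow, ← Real.rpow_natCast, ← Real.rpow_mul Real.pi_pos.le]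
    ring_nf
  rw [measureReal_def, InnerProductSpace.volume_ball, ENNReal.ofReal_one, one_pow, one_mul,
    ENNReal.toReal_ofReal (by positivity), hsqrt, Real.Gamma_add_one hn.ne', unitSphereArea]
  have := (Real.Gamma_pos_of_pos hn).ne'
  field_simp

section Kernel

variable {F : Type*} [NormedAddCommGroup F] [MeasurableSpace F] [BorelSpace F] {μ : Measure F}

theorem setLIntegral_rpow_dist_le {q₀ q : ℝ} (hq₀ : q₀ ≤ q) (hq : q < 0) (s : Set F) (y : F) :
    ∫⁻ x in s, ENNReal.ofReal (‖x - y‖ ^ q) ∂μ ≤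
      ∫⁻ x in s, ENNReal.ofReal (‖x - y‖ ^ q₀) ∂μ +
        ∫⁻ x in (ball y 1)ᶜ, ENNReal.ofReal (‖x - y‖ ^ q) ∂μ := by
  set far := (ball y 1)ᶜ.indicator fun x ↦ ENNReal.ofReal (‖x - y‖ ^ q)
  have hpt : ∀ x, ENNReal.ofReal (‖x - y‖ ^ q) ≤ ENNReal.ofReal (‖x - y‖ ^ q₀) + far x := by
    intro x
    simp only [far]
    by_cases hx : x ∈ ball y 1
    · rw [indicator_of_notMem (not_not.2 hx), add_zero]
      refine ENNReal.ofReal_le_ofReal ?_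
      rw [mem_ball, dist_eq_norm] at hx
      rcases (norm_nonneg (x - y)).eq_or_lt with h0 | h0
      · rw [← h0, Real.zero_rpow hq.ne]
        positivity
      · exact Real.rpow_le_rpow_of_exponent_ge h0 hx.le hq₀
    · rw [indicator_of_mem (show x ∈ (ball y 1)ᶜ from hx)]
      exact le_add_self
  have hfar : Measurable far := by
    refine Measurable.indicator ?_ measurableSet_ball.compl
    fun_prop
  calc ∫⁻ x in s, ENNReal.ofReal (‖x - y‖ ^ q) ∂μ
      ≤ ∫⁻ x in s, (ENNReal.ofReal (‖x - y‖ ^ q₀) + far x) ∂μ := lintegral_mono hpt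
    _ = ∫⁻ x in s, ENNReal.ofReal (‖x - y‖ ^ q₀) ∂μ + ∫⁻ x in s, far x ∂μ :=
        lintegral_add_right' _ hfar.aemeasurable
    _ ≤ _ := by
        refine add_le_add le_rfl ?_
        exact (setLIntegral_le_lintegral s far).trans_eq
          (lintegral_indicator measurableSet_ball.compl _)

theorem setLIntegral_compl_ball_rpow_dist_le {q : ℝ} (hq : q ≤ 0) (E : Set F) (y : F) :
    ∫⁻ x in (ball y 1)ᶜ, ENNReal.ofReal (‖x - y‖ ^ q) ∂μ ≤
      μ E + ∫⁻ x in Eᶜ, ENNReal.ofReal (‖x - y‖ ^ q) ∂μ := by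
  set far := (ball y 1)ᶜ.indicator fun x ↦ ENNReal.ofReal (‖x - y‖ ^ q)
  have hfar_le_one : far ≤ 1 := by
    refine indicator_le fun x hx ↦ ?_
    rw [mem_compl_iff, mem_ball, not_lt, dist_eq_norm] at hx
    simpa using Real.rpow_le_one_of_one_le_of_nonpos hx hq
  calc ∫⁻ x in (ball y 1)ᶜ, ENNReal.ofReal (‖x - y‖ ^ q) ∂μ
      = ∫⁻ x in E ∪ Eᶜ, far x ∂μ := by
        rw [union_compl_self, Measure.restrict_univ, lintegral_indicator measurableSet_ball.compl]
    _ ≤ ∫⁻ x in E, far x ∂μ + ∫⁻ x in Eᶜ, far x ∂μ := lintegral_union_le _ _ _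
    _ ≤ ∫⁻ _ in E, 1 ∂μ + ∫⁻ x in Eᶜ, ENNReal.ofReal (‖x - y‖ ^ q) ∂μ := by
        gcongr with x
        · exact hfar_le_one x
        · exact indicator_le_self _ _ x
    _ = _ := by rw [setLIntegral_one]

end Kernel

section FracPer

variable {d : ℕ}

theorem EuclideanSpace.lintegral_compl_ball_rpow_dist (hd : 1 ≤ d) {α : ℝ} (hα : 0 < α)
    (y : EuclideanSpace ℝ (Fin d)) :
    ∫⁻ x in (ball y 1)ᶜ, ENNReal.ofReal (‖x - y‖ ^ (-(d : ℝ) - α)) =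
      ENNReal.ofReal (unitSphereArea d / α) := by
  have : Nontrivial (EuclideanSpace ℝ (Fin d)) :=
    Module.nontrivial_of_finrank_pos (R := ℝ) (by rwa [finrank_euclideanSpace_fin])
  have h := _root_.lintegral_compl_ball_rpow_dist volume hα y
  rwa [finrank_mul_volumeReal_unitBall, finrank_euclideanSpace_fin] at h

theorem ofReal_mul_fracPer_le (hd : 1 ≤ d) {α α₀ : ℝ} (hα : 0 < α) (hαα₀ : α ≤ α₀)
    (E : Set (EuclideanSpace ℝ (Fin d))) :
    ENNReal.ofReal α * fracPer α E ≤
      ENNReal.ofReal α * fracPer α₀ E + ENNReal.ofReal (unitSphereArea d) * volume E := by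
  have hinner (y : EuclideanSpace ℝ (Fin d)) :
      ∫⁻ x in Eᶜ, ENNReal.ofReal (‖x - y‖ ^ (-(d : ℝ) - α)) ≤
        (∫⁻ x in Eᶜ, ENNReal.ofReal (‖x - y‖ ^ (-(d : ℝ) - α₀))) +
          ENNReal.ofReal (unitSphereArea d / α) := by
    rw [← EuclideanSpace.lintegral_compl_ball_rpow_dist hd hα y]
    have : (0 : ℝ) ≤ d := d.cast_nonneg
    exact setLIntegral_rpow_dist_le (by linarith) (by linarith) _ y
  have hper : fracPer α E ≤ fracPer α₀ E + ENNReal.ofReal (unitSphereArea d / α) * volume E :=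
    calc fracPer α E
        ≤ ∫⁻ y in E, ((∫⁻ x in Eᶜ, ENNReal.ofReal (‖x - y‖ ^ (-(d : ℝ) - α₀))) +
            ENNReal.ofReal (unitSphereArea d / α)) := lintegral_mono hinner
      _ = _ := by rw [lintegral_add_right _ measurable_const, setLIntegral_const, fracPer]
  calc ENNReal.ofReal α * fracPer α E
      ≤ ENNReal.ofReal α * (fracPer α₀ E + ENNReal.ofReal (unitSphereArea d / α) * volume E) := by
        gcongr
    _ = _ := by rw [mul_add, ← mul_assoc, ← ENNReal.ofReal_mul hα.le, mul_div_cancel₀ _ hα.ne']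

theorem sub_mul_le_ofReal_mul_fracPer (hd : 1 ≤ d) {α : ℝ} (hα : 0 < α)
    (E : Set (EuclideanSpace ℝ (Fin d))) :
    (ENNReal.ofReal (unitSphereArea d) - ENNReal.ofReal α * volume E) * volume E ≤
      ENNReal.ofReal α * fracPer α E := by
  have hinner (y : EuclideanSpace ℝ (Fin d)) :
      ENNReal.ofReal (unitSphereArea d / α) - volume E ≤
        ∫⁻ x in Eᶜ, ENNReal.ofReal (‖x - y‖ ^ (-(d : ℝ) - α)) := by
    rw [tsub_le_iff_left, ← EuclideanSpace.lintegral_compl_ball_rpow_dist hd hα y]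
    have : (0 : ℝ) ≤ d := d.cast_nonneg
    exact setLIntegral_compl_ball_rpow_dist_le (by linarith) E y
  have hper : (ENNReal.ofReal (unitSphereArea d / α) - volume E) * volume E ≤ fracPer α E :=
    calc (ENNReal.ofReal (unitSphereArea d / α) - volume E) * volume E
        = ∫⁻ _ in E, (ENNReal.ofReal (unitSphereArea d / α) - volume E) :=
          (setLIntegral_const _ _).symm
      _ ≤ fracPer α E := lintegral_mono hinner
  calc (ENNReal.ofReal (unitSphereArea d) - ENNReal.ofReal α * volume E) * volume E
      = ENNReal.ofReal α * ((ENNReal.ofReal (unitSphereArea d / α) - volume E) * volume E) := by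
        rw [← mul_assoc, ENNReal.mul_sub fun _ _ ↦ ENNReal.ofReal_ne_top,
          ← ENNReal.ofReal_mul hα.le, mul_div_cancel₀ _ hα.ne']
    _ ≤ _ := by gcongr

end FracPer

theorem statement13_general {d : ℕ} (hd : 1 ≤ d)
    (E : Set (EuclideanSpace ℝ (Fin d)))
    (hEvol : volume E < ⊤)
    (α₀ : ℝ) (hα₀ : α₀ ∈ Set.Ioo (0 : ℝ) 1) (hPer₀ : fracPer α₀ E < ⊤) :
    Tendsto (fun α : ℝ => ENNReal.ofReal α * fracPer α E)
      (𝓝[Set.Ioo (0 : ℝ) 1] 0)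
      (𝓝 (ENNReal.ofReal (2 * Real.pi ^ ((d : ℝ) / 2) / Real.Gamma ((d : ℝ) / 2)) *
        volume E)) := by
  set κ := ENNReal.ofReal (unitSphereArea d)
  have hsmall : ∀ᶠ α in 𝓝[Ioo 0 1] 0, 0 < α ∧ α ≤ α₀ := by
    filter_upwards [self_mem_nhdsWithin, nhdsWithin_le_nhds (Iic_mem_nhds hα₀.1)]
      with α hα hαα₀ using ⟨hα.1, hαα₀⟩
  have hofReal : Tendsto (fun α : ℝ ↦ ENNReal.ofReal α) (𝓝[Ioo 0 1] 0) (𝓝 0) := by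
    simpa using (ENNReal.continuous_ofReal.tendsto 0).mono_left nhdsWithin_le_nhds
  have hlower : Tendsto (fun α : ℝ ↦ (κ - ENNReal.ofReal α * volume E) * volume E)
      (𝓝[Ioo 0 1] 0) (𝓝 (κ * volume E)) := by
    have hαE : Tendsto (fun α : ℝ ↦ ENNReal.ofReal α * volume E) (𝓝[Ioo 0 1] 0) (𝓝 0) := by
      simpa using ENNReal.Tendsto.mul_const hofReal (Or.inr hEvol.ne)
    simpa using ENNReal.Tendsto.mul_const
      (ENNReal.Tendsto.sub tendsto_const_nhds hαE (Or.inl ENNReal.ofReal_ne_top))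
      (Or.inr hEvol.ne)
  have hupper : Tendsto (fun α : ℝ ↦ ENNReal.ofReal α * fracPer α₀ E + κ * volume E)
      (𝓝[Ioo 0 1] 0) (𝓝 (κ * volume E)) := by
    simpa using (ENNReal.Tendsto.mul_const hofReal (Or.inr hPer₀.ne)).add_const (κ * volume E)
  refine tendsto_of_tendsto_of_tendsto_of_le_of_le' hlower hupper ?_ ?_
  · filter_upwards [hsmall] with α hα using sub_mul_le_ofReal_mul_fracPer hd hα.1 E
  · filter_upwards [hsmall] with α hα using ofReal_mul_fracPer_le hd hα.1 hα.2 E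

/-- Convergence of fractional perimeters as `α ↓ 0`: if `E ⊂ ℝ^d` is Borel with
`|E| < ∞` and `Per_{α₀}(E) < ∞` for some `α₀ ∈ (0,1)`, then
`α Per_α(E) → κ_{d−1} |E|` where `κ_{d−1} = 2π^{d/2}/Γ(d/2)`. -/
theorem statement13 {d : ℕ} (hd : 1 ≤ d)
    (E : Set (EuclideanSpace ℝ (Fin d)))
    (hE : MeasurableSet E) (hEvol : volume E < ⊤)
    (α₀ : ℝ) (hα₀ : α₀ ∈ Set.Ioo (0 : ℝ) 1) (hPer₀ : fracPer α₀ E < ⊤) :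
    Tendsto (fun α : ℝ => ENNReal.ofReal α * fracPer α E)
      (𝓝[Set.Ioo (0 : ℝ) 1] 0)
      (𝓝 (ENNReal.ofReal (2 * Real.pi ^ ((d : ℝ) / 2) / Real.Gamma ((d : ℝ) / 2)) *
        volume E)) :=
  statement13_general hd E hEvol α₀ hα₀ hPer₀
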